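/- Let G be a local groupoid satisfying the inverse-decomposition property (as in the two-sided decomposition of any composable pair into invertible factors). Define an associator at x ∈ M to be an element g with s(g) = t(g) = x such that some well-formed word w admits both a sequence of contractions ending at the one-letter word (g) and a sequence of contractions ending at the one-letter word (u(x)). Then the kernel of the completion map G → AC(G) (the set of arrows mapped to a unit of AC(G)) is exactly the set of all associators of G. -/

import Mathlib

/-- An (algebraic) local groupoid over a base `M`: a set of arrows `G` with source,
target, unit, a partially defined multiplication (with domain `D`) satisfying the
unit laws and 3-associativity wherever defined. -/
structure LocalGroupoid (G : Type*) (M : Type*) where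
  s : G → M
  t : G → M
  unit : M → G
  s_unit : ∀ x, s (unit x) = x
  t_unit : ∀ x, t (unit x) = x
  /-- the domain of the multiplication -/
  D : G → G → Prop
  D_st : ∀ {g h}, D g h → s g = t h
  mul : G → G → G
  D_unit_right : ∀ g, D g (unit (s g))
  D_unit_left : ∀ g, D (unit (t g)) g
  s_mul : ∀ {g h}, D g h → s (mul g h) = s h
  t_mul : ∀ {g h}, D g h → t (mul g h) = t g
  mul_unit_right : ∀ g, mul g (unit (s g)) = g
  unit_mul : ∀ g, mul (unit (t g)) g = g
  assoc3 : ∀ {g h k}, D g h → D (mul g h) k → D h k → D g (mul h k) →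
    mul (mul g h) k = mul g (mul h k)

namespace LocalGroupoid

variable {G : Type*} {M : Type*} (L : LocalGroupoid G M)

/-- A well-formed word: a nonempty list `(w₁, …, wₙ)` of arrows with
`s wᵢ = t wᵢ₊₁`. -/
def WFWord (w : List G) : Prop := w ≠ [] ∧ w.Chain' (fun a b => L.s a = L.t b)

/-- An elementary contraction of words: replace an adjacent pair whose product is
defined by the product. -/
inductive Contr : List G → List G → Prop
  | mk (p q : List G) {g h : G} (hD : L.D g h) :
      Contr (p ++ g :: h :: q) (p ++ L.mul g h :: q)

/-- The equivalence relation on words generated by contractions and expansions. -/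
def WordEquiv : List G → List G → Prop := Relation.EqvGen L.Contr

/-- `ContractsTo w v`: `v` is obtained from `w` by a finite sequence of contractions
(equivalently, `w` is obtained from `v` by expansions, i.e. `v ≤ w`). -/
def ContractsTo : List G → List G → Prop := Relation.ReflTransGen L.Contr

/-- The type of well-formed words. -/
def Word := {w : List G // L.WFWord w}

instance wordSetoid : Setoid L.Word :=
  ⟨fun a b => L.WordEquiv a.1 b.1, by
    constructor
    · exact fun a => Relation.EqvGen.refl _
    · exact fun h => Relation.EqvGen.symm _ _ h
    · exact fun h1 h2 => Relation.EqvGen.trans _ _ _ h1 h2⟩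

/-- The associative completion of a local groupoid: well-formed words modulo
contractions and expansions. -/
def AC := Quotient L.wordSetoid

/-- The one-letter word `(g)`. -/
def singletonWord (g : G) : L.Word := ⟨[g], by simp [WFWord, List.Chain']⟩

/-- The completion map `G → AC(G)`. -/
def completion (g : G) : L.AC := Quotient.mk _ (L.singletonWord g)

/-- Target of a well-formed word: the target of its first letter. -/
def wordTgt (w : L.Word) : M := L.t (w.1.head w.2.1)

/-- Source of a well-formed word: the source of its last letter. -/
def wordSrc (w : L.Word) : M := L.s (w.1.getLast w.2.1)

/-- `b` is a two-sided inverse of `a`. -/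
def InvPair (a b : G) : Prop :=
  L.D a b ∧ L.D b a ∧ L.mul a b = L.unit (L.t a) ∧ L.mul b a = L.unit (L.s a)

/-- An arrow is invertible if it has a two-sided inverse. -/
def Invertible (a : G) : Prop := ∃ b, L.InvPair a b

/-- `LProd as seed r`: `r = a₁ (a₂ (⋯ (aₖ seed)))` where `as = [a₁, …, aₖ]`, all
products being defined. -/
inductive LProd : List G → G → G → Prop
  | nil (g : G) : LProd [] g g
  | cons {as : List G} {g p : G} (a : G) : LProd as g p → L.D a p → LProd (a :: as) g (L.mul a p)

/-- `RProd seed bs r`: `r = ((⋯((seed b₁) b₂)⋯) bₖ)` where `bs = [b₁, …, bₖ]`, all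
products being defined. -/
inductive RProd : G → List G → G → Prop
  | nil (g : G) : RProd g [] g
  | cons {bs : List G} {g r : G} (b : G) (hD : L.D g b) : RProd (L.mul g b) bs r → RProd g (b :: bs) r

/-- The inverse-decomposition property: every composable pair `(g,h)` decomposes
through invertible elements, either on the left:
`g = aₗ(⋯(a₂ a₁))` and `h = a₁⁻¹(⋯(aₗ⁻¹ (gh)))`, or on the right:
`h = ((b₁ b₂)⋯)bₘ` and `g = (((gh) bₘ⁻¹)⋯) b₁⁻¹`. -/
def InvDecomp : Prop :=
  ∀ g h, L.D g h →
    (∃ a : List (G × G), (∀ p ∈ a, L.InvPair p.1 p.2) ∧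
        L.LProd (a.map Prod.fst).reverse (L.unit (L.s g)) g ∧
        L.LProd (a.map Prod.snd) (L.mul g h) h) ∨
    (∃ b : List (G × G), (∀ p ∈ b, L.InvPair p.1 p.2) ∧
        L.RProd (L.unit (L.t h)) (b.map Prod.fst) h ∧
        L.RProd (L.mul g h) (b.map Prod.snd).reverse g)

/-- An associator at `x`: an arrow `g` with `s g = t g = x` such that some
well-formed word can be contracted both to `(g)` and to `(u x)`. -/
def IsAssociator (x : M) (g : G) : Prop :=
  L.s g = x ∧ L.t g = x ∧
    ∃ w, L.WFWord w ∧ L.ContractsTo w [g] ∧ L.ContractsTo w [L.unit x]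

/-- An arrow is inversional if it is a well-defined product of invertible elements. -/
def Inversional (g : G) : Prop :=
  ∃ w : List G, L.WFWord w ∧ (∀ a ∈ w, L.Invertible a) ∧ L.ContractsTo w [g]

/-- `EvalsTo w g`: some full bracketing of the word `w` can be evaluated (all
intermediate products being defined), with result `g`. -/
inductive EvalsTo : List G → G → Prop
  | single (g : G) : EvalsTo [g] g
  | mul {w1 w2 : List G} {g h : G} : EvalsTo w1 g → EvalsTo w2 h → L.D g h →
      EvalsTo (w1 ++ w2) (L.mul g h)

/-- Global associativity: all defined bracketings of a composable tuple agree. -/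
def GloballyAssociative : Prop := ∀ w g h, L.EvalsTo w g → L.EvalsTo w h → g = h

end LocalGroupoid

/-- A morphism of local groupoids. -/
structure IsMorphism {G₁ M₁ G₂ M₂ : Type*} (L₁ : LocalGroupoid G₁ M₁)
    (L₂ : LocalGroupoid G₂ M₂) (F : G₁ → G₂) (f : M₁ → M₂) : Prop where
  map_s : ∀ g, L₂.s (F g) = f (L₁.s g)
  map_t : ∀ g, L₂.t (F g) = f (L₁.t g)
  map_unit : ∀ x, F (L₁.unit x) = L₂.unit (f x)
  map_D : ∀ {g h}, L₁.D g h → L₂.D (F g) (F h)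
  map_mul : ∀ {g h}, L₁.D g h → F (L₁.mul g h) = L₂.mul (F g) (F h)

/-- A local groupoid is global (an honest groupoid) if multiplication is defined for
all matching pairs and every arrow is invertible. -/
structure IsGlobal {G M : Type*} (L : LocalGroupoid G M) : Prop where
  total : ∀ {g h}, L.s g = L.t h → L.D g h
  inv : ∀ g, L.Invertible g

/-! Contractions of a word `w` to a word `v` are exactly the splittings of `w` into consecutive
blocks together with bracketings of the blocks evaluating to the letters of `v`. So the
equivalence generated by contractions is "having a common expansion" as soon as any two
bracketings `A`, `B` with the same value `k` have a common expansion. For `B = (B₁)(B₂)` with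
`k = g h`, the inverse decomposition of `(g, h)` provides words such as
`aₗ ⋯ a₁ u a₁⁻¹ ⋯ aₗ⁻¹` that evaluate to units; padding `A` by them lets it be re-bracketed as
a bracketing of `g` followed by one of `h`, to which induction applies, while the padded word
still contracts back to `A`. Finally a common expansion of `(g)` and `(u y)` evaluates to both,
which forces `s g = t g = y`. -/

namespace LocalGroupoid

variable {G M : Type*} {L : LocalGroupoid G M}

theorem Contr.append_append (p q : List G) {w v : List G} (h : L.Contr w v) :
    L.Contr (p ++ w ++ q) (p ++ v ++ q) := by
  obtain ⟨p', q', hD⟩ := h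
  simpa using Contr.mk (L := L) (p ++ p') (q' ++ q) hD

theorem ContractsTo.append_append (p q : List G) {w v : List G} (h : L.ContractsTo w v) :
    L.ContractsTo (p ++ w ++ q) (p ++ v ++ q) :=
  Relation.ReflTransGen.lift (fun w ↦ p ++ w ++ q) (fun _ _ ↦ Contr.append_append p q) _ _ h

theorem ContractsTo.append {w v w' v' : List G} (h : L.ContractsTo w v)
    (h' : L.ContractsTo w' v') : L.ContractsTo (w ++ w') (v ++ v') := by
  have h₁ := h.append_append [] w'
  have h₂ := h'.append_append v []
  simp only [List.nil_append, List.append_nil] at h₁ h₂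
  exact h₁.trans h₂

theorem ContractsTo.wordEquiv {w v : List G} (h : L.ContractsTo w v) : L.WordEquiv w v :=
  Relation.EqvGen.reflTransGen_le_eqvGen _ _ _ h

namespace EvalsTo

theorem contractsTo {w : List G} {v : G} (h : L.EvalsTo w v) : L.ContractsTo w [v] := by
  induction h with
  | single g => exact .refl
  | mul _ _ hD ih₁ ih₂ => exact (ih₁.append ih₂).tail (Contr.mk [] [] hD)

theorem exists_cons {w : List G} {v : G} (h : L.EvalsTo w v) :
    ∃ a w', w = a :: w' ∧ L.t a = L.t v := by
  induction h with
  | single g => exact ⟨g, [], rfl, rfl⟩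
  | @mul w₁ w₂ g h _ _ hD ih₁ _ =>
    obtain ⟨a, w', rfl, ha⟩ := ih₁
    exact ⟨a, w' ++ w₂, rfl, ha.trans (L.t_mul hD).symm⟩

theorem exists_concat {w : List G} {v : G} (h : L.EvalsTo w v) :
    ∃ w' a, w = w' ++ [a] ∧ L.s a = L.s v := by
  induction h with
  | single g => exact ⟨[], g, rfl, rfl⟩
  | @mul w₁ w₂ g h _ _ hD _ ih₂ =>
    obtain ⟨w', a, rfl, ha⟩ := ih₂
    exact ⟨w₁ ++ w', a, by simp, ha.trans (L.s_mul hD).symm⟩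

theorem t_eq {w : List G} {v v' : G} (h : L.EvalsTo w v) (h' : L.EvalsTo w v') :
    L.t v = L.t v' := by
  obtain ⟨a, w₁, rfl, ha⟩ := h.exists_cons
  obtain ⟨a', w₂, hw, ha'⟩ := h'.exists_cons
  obtain ⟨rfl, -⟩ := List.cons.inj hw
  exact ha.symm.trans ha'

theorem s_eq {w : List G} {v v' : G} (h : L.EvalsTo w v) (h' : L.EvalsTo w v') :
    L.s v = L.s v' := by
  obtain ⟨w₁, a, rfl, ha⟩ := h.exists_concat
  obtain ⟨w₂, a', hw, ha'⟩ := h'.exists_concat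
  obtain rfl : a = a' := by simpa using (List.append_inj' hw rfl).2
  exact ha.symm.trans ha'

theorem wfWord {w : List G} {v : G} (h : L.EvalsTo w v) : L.WFWord w := by
  induction h with
  | single g => exact (L.singletonWord g).2
  | @mul w₁ w₂ g h h₁ h₂ hD ih₁ ih₂ =>
    refine ⟨by simp [ih₁.1], List.isChain_append.2 ⟨ih₁.2, ih₂.2, ?_⟩⟩
    obtain ⟨w₁', a, rfl, ha⟩ := h₁.exists_concat
    obtain ⟨b, w₂', rfl, hb⟩ := h₂.exists_cons
    simpa [ha, hb] using L.D_st hD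

theorem replace {w : List G} {v : G} (h : L.EvalsTo w v) {p q u : List G} {a : G}
    (hw : w = p ++ a :: q) (hu : L.EvalsTo u a) : L.EvalsTo (p ++ u ++ q) v := by
  induction h generalizing p q with
  | single g =>
    obtain ⟨rfl, rfl, rfl⟩ : p = [] ∧ g = a ∧ q = [] := by
      rcases p with _ | ⟨_, _ | ⟨_, _⟩⟩ <;> simp_all
    simpa using hu
  | @mul w₁ w₂ g h h₁ h₂ hD ih₁ ih₂ =>
    rcases List.append_eq_append_iff.mp hw with ⟨r, rfl, hw₂⟩ | ⟨r, hw₁, hq⟩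
    · simpa using h₁.mul (ih₂ hw₂) hD
    · rcases r with _ | ⟨b, r⟩
      · simp only [List.append_nil, List.nil_append] at hw₁ hq
        subst hw₁
        simpa using h₁.mul (ih₂ (p := []) hq.symm) hD
      · obtain ⟨rfl, rfl⟩ := List.cons.inj hq
        simpa using (ih₁ hw₁).mul h₂ hD

theorem cons_of_unit {w : List G} {a : G} (hw : L.EvalsTo w (L.unit (L.s a))) :
    L.EvalsTo (a :: w) a := by
  simpa [L.mul_unit_right] using (single a).mul hw (L.D_unit_right a)

theorem unit_cons {w : List G} {v : G} (hw : L.EvalsTo w v) :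
    L.EvalsTo (L.unit (L.t v) :: w) v := by
  simpa [L.unit_mul] using (single _).mul hw (L.D_unit_left v)

theorem append_unit {w : List G} {v : G} (hw : L.EvalsTo w v) :
    L.EvalsTo (w ++ [L.unit (L.s v)]) v := by
  simpa [L.mul_unit_right] using hw.mul (single _) (L.D_unit_right v)

theorem unit_cons_contractsTo {w : List G} {v : G} (hw : L.EvalsTo w v) :
    L.ContractsTo (L.unit (L.t v) :: w) w := by
  obtain ⟨a, w', rfl, ha⟩ := hw.exists_cons
  have hstep := Contr.mk (L := L) [] w' (L.D_unit_left a)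
  rw [L.unit_mul, ha] at hstep
  exact .single hstep

theorem append_unit_contractsTo {w : List G} {v : G} (hw : L.EvalsTo w v) :
    L.ContractsTo (w ++ [L.unit (L.s v)]) w := by
  obtain ⟨w', a, rfl, ha⟩ := hw.exists_concat
  have hstep := Contr.mk (L := L) w' [] (L.D_unit_right a)
  rw [L.mul_unit_right, ha] at hstep
  exact .single (by simpa using hstep)

theorem pad_contractsTo {pre w post : List G} {v : G} (hw : L.EvalsTo w v)
    (hpre : L.EvalsTo pre (L.unit (L.t v))) (hpost : L.EvalsTo post (L.unit (L.s v))) :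
    L.ContractsTo (pre ++ w ++ post) w :=
  (((hpre.contractsTo.append .refl).append hpost.contractsTo).trans
    (hw.unit_cons_contractsTo.append .refl)).trans hw.append_unit_contractsTo

end EvalsTo

inductive EvalsBlockwise (L : LocalGroupoid G M) : List G → List G → Prop
  | nil : EvalsBlockwise L [] []
  | cons {b w : List G} {k : G} {v : List G} :
      L.EvalsTo b k → EvalsBlockwise L w v → EvalsBlockwise L (b ++ w) (k :: v)

namespace EvalsBlockwise

theorem refl (v : List G) : EvalsBlockwise L v v := by
  induction v with
  | nil => exact .nil
  | cons k v ih => exact .cons (b := [k]) (.single k) ih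

theorem replace {w v : List G} (h : EvalsBlockwise L w v) {p q u : List G} {a : G}
    (hw : w = p ++ a :: q) (hu : L.EvalsTo u a) : EvalsBlockwise L (p ++ u ++ q) v := by
  induction h generalizing p q with
  | nil => simp at hw
  | @cons b w k v hb hw' ih =>
    rcases List.append_eq_append_iff.mp hw with ⟨r, rfl, hw₂⟩ | ⟨r, hb₁, hq⟩
    · simpa using EvalsBlockwise.cons hb (ih hw₂)
    · rcases r with _ | ⟨c, r⟩
      · simp only [List.append_nil, List.nil_append] at hb₁ hq
        subst hb₁
        simpa using EvalsBlockwise.cons hb (ih (p := []) hq.symm)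
      · obtain ⟨rfl, rfl⟩ := List.cons.inj hq
        simpa using EvalsBlockwise.cons (hb.replace hb₁ hu) hw'

end EvalsBlockwise

theorem ContractsTo.evalsBlockwise {w v : List G} (h : L.ContractsTo w v) :
    EvalsBlockwise L w v := by
  induction h using Relation.ReflTransGen.head_induction_on with
  | refl => exact .refl v
  | head hstep _ ih =>
    obtain ⟨p, q, hD⟩ := hstep
    simpa using ih.replace rfl ((EvalsTo.single _).mul (.single _) hD)

theorem contractsTo_singleton_iff {w : List G} {v : G} :
    L.ContractsTo w [v] ↔ L.EvalsTo w v := by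
  refine ⟨fun h ↦ ?_, EvalsTo.contractsTo⟩
  obtain _ | ⟨hb, hnil⟩ := h.evalsBlockwise
  cases hnil
  simpa using hb

theorem RProd.evalsTo_append {seed r : G} {l : List G} (h : L.RProd seed l r) {w : List G}
    (hw : L.EvalsTo w seed) : L.EvalsTo (w ++ l) r := by
  induction h generalizing w with
  | nil => simpa using hw
  | cons b hD _ ih => simpa using ih (hw.mul (.single b) hD)

theorem LProd.evalsTo_append {seed r : G} {l : List G} (h : L.LProd l seed r) {w : List G}
    (hw : L.EvalsTo w seed) : L.EvalsTo (l ++ w) r := by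
  induction h with
  | nil => exact hw
  | cons a _ hD ih => exact (EvalsTo.single a).mul (ih hw) hD

theorem LProd.of_append_singleton {l : List G} {a seed r : G} (h : L.LProd (l ++ [a]) seed r) :
    L.D a seed ∧ L.LProd l (L.mul a seed) r := by
  induction l generalizing r with
  | nil =>
    obtain _ | ⟨_, hnil, hD⟩ := h
    cases hnil
    exact ⟨hD, .nil _⟩
  | cons b l ih =>
    obtain _ | ⟨_, h, hD⟩ := h
    exact (ih h).imp_right (LProd.cons b · hD)

theorem RProd.evalsTo_unit_conj (b : List (G × G)) (hb : ∀ p ∈ b, L.InvPair p.1 p.2)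
    {r h : G} (hr : L.RProd r (b.map Prod.fst) h) {w : List G}
    (hw : L.EvalsTo w (L.unit (L.s r))) :
    L.EvalsTo ((b.map Prod.snd).reverse ++ w ++ b.map Prod.fst) (L.unit (L.s h)) := by
  induction b generalizing r w with
  | nil =>
    cases hr
    simpa using hw
  | cons p b ih =>
    obtain _ | ⟨_, hD, hr⟩ := hr
    obtain ⟨hD₁, hD₂, -, hinv⟩ := hb p List.mem_cons_self
    have hp₂ : L.EvalsTo (p.2 :: w) p.2 := by
      rw [L.D_st hD, ← L.D_st hD₂] at hw
      exact hw.cons_of_unit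
    have hconj : L.EvalsTo (p.2 :: w ++ [p.1]) (L.unit (L.s (L.mul r p.1))) := by
      simpa [L.s_mul hD, hinv] using hp₂.mul (.single p.1) hD₂
    simpa using ih (fun q hq ↦ hb q (List.mem_cons_of_mem p hq)) hr hconj

theorem LProd.evalsTo_unit_conj (a : List (G × G)) (ha : ∀ p ∈ a, L.InvPair p.1 p.2)
    {r g : G} (hr : L.LProd (a.map Prod.fst).reverse r g) {w : List G}
    (hw : L.EvalsTo w (L.unit (L.t r))) :
    L.EvalsTo ((a.map Prod.fst).reverse ++ w ++ a.map Prod.snd) (L.unit (L.t g)) := by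
  induction a generalizing r w with
  | nil =>
    cases hr
    simpa using hw
  | cons p a ih =>
    obtain ⟨hD, hr⟩ := LProd.of_append_singleton (by simpa using hr)
    obtain ⟨hD₁, -, hinv, -⟩ := ha p List.mem_cons_self
    have hp₁ : L.EvalsTo (p.1 :: w) p.1 := by
      rw [← L.D_st hD] at hw
      exact hw.cons_of_unit
    have hconj : L.EvalsTo (p.1 :: w ++ [p.2]) (L.unit (L.t (L.mul p.1 r))) := by
      simpa [L.t_mul hD, hinv] using hp₁.mul (.single p.2) hD₁
    simpa using ih (fun q hq ↦ ha q (List.mem_cons_of_mem p hq)) hr hconj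

theorem exists_unit_pad_split (hID : L.InvDecomp) {g h : G} (hD : L.D g h) :
    ∃ pre post : List G, L.EvalsTo pre (L.unit (L.t (L.mul g h))) ∧
      L.EvalsTo post (L.unit (L.s (L.mul g h))) ∧
      ∀ w, L.EvalsTo w (L.mul g h) →
        ∃ wg wh, pre ++ w ++ post = wg ++ wh ∧ L.EvalsTo wg g ∧ L.EvalsTo wh h := by
  rcases hID g h hD with ⟨a, ha, hg, hh⟩ | ⟨b, hb, hh, hg⟩
  · refine ⟨(a.map Prod.fst).reverse ++ [L.unit (L.s g)] ++ a.map Prod.snd,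
      [L.unit (L.s (L.mul g h))], ?_, .single _, fun w hw ↦ ?_⟩
    · rw [L.t_mul hD]
      exact LProd.evalsTo_unit_conj a ha hg (by rw [L.t_unit]; exact .single _)
    · refine ⟨(a.map Prod.fst).reverse ++ [L.unit (L.s g)],
        a.map Prod.snd ++ w ++ [L.unit (L.s (L.mul g h))], by simp,
        hg.evalsTo_append (.single _), ?_⟩
      simpa using hh.evalsTo_append hw.append_unit
  · refine ⟨[L.unit (L.t (L.mul g h))],
      (b.map Prod.snd).reverse ++ [L.unit (L.t h)] ++ b.map Prod.fst, .single _, ?_,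
      fun w hw ↦ ?_⟩
    · rw [L.s_mul hD]
      exact RProd.evalsTo_unit_conj b hb hh (by rw [L.s_unit]; exact .single _)
    · refine ⟨L.unit (L.t (L.mul g h)) :: w ++ (b.map Prod.snd).reverse,
        L.unit (L.t h) :: b.map Prod.fst, by simp,
        hg.evalsTo_append hw.unit_cons, ?_⟩
      simpa using hh.evalsTo_append (.single _)

theorem exists_common_expansion_of_evalsTo (hID : L.InvDecomp) {v : List G} {k : G}
    (hv : L.EvalsTo v k) {w : List G} (hw : L.EvalsTo w k) :
    ∃ z, L.ContractsTo z w ∧ L.ContractsTo z v := by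
  induction hv generalizing w with
  | single k => exact ⟨w, .refl, hw.contractsTo⟩
  | mul _ _ hD ih₁ ih₂ =>
    obtain ⟨pre, post, hpre, hpost, hsplit⟩ := exists_unit_pad_split hID hD
    obtain ⟨wg, wh, hpad, hwg, hwh⟩ := hsplit w hw
    obtain ⟨zg, hzg, hzg'⟩ := ih₁ hwg
    obtain ⟨zh, hzh, hzh'⟩ := ih₂ hwh
    refine ⟨zg ++ zh, ?_, hzg'.append hzh'⟩
    exact (hpad ▸ hzg.append hzh).trans (hw.pad_contractsTo hpre hpost)

theorem EvalsBlockwise.exists_common_expansion (hID : L.InvDecomp) {w w' v : List G}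
    (h : EvalsBlockwise L w v) (h' : EvalsBlockwise L w' v) :
    ∃ z, L.ContractsTo z w ∧ L.ContractsTo z w' := by
  induction h generalizing w' with
  | nil =>
    cases h'
    exact ⟨[], .refl, .refl⟩
  | cons hb _ ih =>
    obtain _ | ⟨hb', h'⟩ := h'
    obtain ⟨z₁, h₁, h₁'⟩ := exists_common_expansion_of_evalsTo hID hb' hb
    obtain ⟨z₂, h₂, h₂'⟩ := ih h'
    exact ⟨z₁ ++ z₂, h₁.append h₂, h₁'.append h₂'⟩

theorem ContractsTo.exists_common_expansion (hID : L.InvDecomp) {w w' v : List G}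
    (h : L.ContractsTo w v) (h' : L.ContractsTo w' v) :
    ∃ z, L.ContractsTo z w ∧ L.ContractsTo z w' :=
  h.evalsBlockwise.exists_common_expansion hID h'.evalsBlockwise

theorem WordEquiv.exists_common_expansion (hID : L.InvDecomp) {w w' : List G}
    (h : L.WordEquiv w w') : ∃ z, L.ContractsTo z w ∧ L.ContractsTo z w' := by
  have hjoin : Equivalence (Relation.Join (Relation.ReflTransGen (Function.swap L.Contr))) :=
    Relation.equivalence_join fun _ _ _ hb hc ↦ by
      obtain ⟨z, hz, hz'⟩ := ContractsTo.exists_common_expansion hID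
        (Relation.reflTransGen_swap.1 hb) (Relation.reflTransGen_swap.1 hc)
      exact ⟨z, Relation.reflTransGen_swap.2 hz, Relation.reflTransGen_swap.2 hz'⟩
  obtain ⟨z, hz, hz'⟩ := hjoin.eqvGen_iff.1 <|
    Relation.EqvGen.mono (fun a _ hab ↦ ⟨a, .refl, .single hab⟩) _ _ h
  exact ⟨z, Relation.reflTransGen_swap.1 hz, Relation.reflTransGen_swap.1 hz'⟩

end LocalGroupoid

/-- For a local groupoid with the inverse-decomposition property,
the kernel of the completion map `G → AC(G)` (arrows whose one-letter word is
equivalent to a unit word) is exactly the set of associators. -/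
theorem kernel_eq_associators {G M : Type*} (L : LocalGroupoid G M)
    (hID : L.InvDecomp) (g : G) :
    (∃ y : M, L.WordEquiv [g] [L.unit y]) ↔ (∃ x : M, L.IsAssociator x g) := by
  constructor
  · rintro ⟨y, hy⟩
    obtain ⟨w, hwg, hwy⟩ := hy.exists_common_expansion hID
    have hg := LocalGroupoid.contractsTo_singleton_iff.1 hwg
    have hu := LocalGroupoid.contractsTo_singleton_iff.1 hwy
    exact ⟨y, (hg.s_eq hu).trans (L.s_unit y), (hg.t_eq hu).trans (L.t_unit y),
      w, hg.wfWord, hwg, hwy⟩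
  · rintro ⟨x, -, -, w, -, hwg, hwx⟩
    exact ⟨x, .trans _ _ _ (.symm _ _ hwg.wordEquiv) hwx.wordEquiv⟩
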